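/- Let A be a set and f₁, …, f_n : A → ℂ. If the determinant of the matrix (f_i(z_j))_{i,j} vanishes for every choice of z₁, …, z_n ∈ A, then the functions f₁, …, f_n are linearly dependent over ℂ, i.e., there exist complex numbers a₁, …, a_n, not all zero, with ∑_i a_i f_i(z) = 0 for all z ∈ A. -/

import Mathlib

/-!
Put `φ z = (f i z)ᵢ ∈ ℂⁿ`. If the vectors `φ z` span `ℂⁿ`, some `n` of them form a basis, and the
matrix with these columns has nonzero determinant. Otherwise a nonzero linear functional `a`
vanishes on every `φ z`, which is the required dependence.
-/

open Submodule Set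

theorem exists_ne_zero_forall_sum_mul_eq_zero_of_span_range_ne_top {K ι A : Type*} [Field K]
    [Fintype ι] {φ : A → ι → K} (hφ : span K (range φ) ≠ ⊤) :
    ∃ a : ι → K, a ≠ 0 ∧ ∀ z, ∑ i, a i * φ z i = 0 := by
  classical
  obtain ⟨ψ, hψ, hker⟩ := exists_le_ker_of_lt_top _ (lt_top_iff_ne_top.mpr hφ)
  refine ⟨fun i => ψ (Pi.single i 1), fun ha => hψ ((Pi.basisFun K ι).ext fun i => ?_), fun z => ?_⟩
  · simpa using congrFun ha i
  · have hz : ψ (φ z) = 0 := hker (subset_span ⟨z, rfl⟩)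
    rw [pi_eq_sum_univ' (φ z), map_sum] at hz
    simpa [mul_comm] using hz

theorem exists_linearIndependent_comp_of_span_range_eq_top {K ι A : Type*} [DivisionRing K]
    [Fintype ι] {φ : A → ι → K} (hφ : span K (range φ) = ⊤) :
    ∃ z : ι → A, LinearIndependent K (φ ∘ z) := by
  obtain ⟨κ, a, -, hspan, hli⟩ := exists_linearIndependent' K φ
  let e : ι ≃ κ := (Pi.basisFun K ι).indexEquiv (.mk hli (by rw [hspan, hφ]))
  exact ⟨a ∘ e, hli.comp e e.injective⟩

/-- If `det (f i (z j)) = 0` for every choice of points `z₁,…,z_n ∈ A`, then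
`f₁,…,f_n` are linearly dependent over `ℂ`. -/
theorem det_vanish_imp_linear_dependent {A : Type*} (n : ℕ) (f : Fin n → A → ℂ)
    (h : ∀ z : Fin n → A, (Matrix.of fun i j => f i (z j)).det = 0) :
    ∃ a : Fin n → ℂ, a ≠ 0 ∧ ∀ z : A, ∑ i, a i * f i z = 0 := by
  by_cases hspan : span ℂ (range fun z i => f i z) = ⊤
  · obtain ⟨z, hz⟩ := exists_linearIndependent_comp_of_span_range_eq_top hspan
    have hunit := Matrix.linearIndependent_cols_iff_isUnit.mp hz
    exact absurd (h z) ((Matrix.isUnit_iff_isUnit_det _).mp hunit).ne_zero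
  · exact exists_ne_zero_forall_sum_mul_eq_zero_of_span_range_ne_top hspan
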